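/- Let f : A^n → B and let τ : Fin n → Fin m. If the i-th argument of f is inessential for every i outside a set S ⊆ Fin n, and τ restricted to S is injective, then every argument of f is 'simulated' in the minor: for all a, b : Fin m → A agreeing on τ(S), we have f(a ∘ τ) = f(b ∘ τ). -/

import Mathlib

/-!
Replacing the coordinates of `a ∘ τ` by those of `b ∘ τ` one at a time, each replacement
happens either at an inessential argument, which leaves `f` unchanged, or at a coordinate
in `S`, where the two tuples already agree because `a` and `b` agree on `τ '' S`.
-/

namespace Function

variable {ι A B : Type*}

def ArgInessential (f : (ι → A) → B) (i : ι) : Prop :=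
  ∀ a b : ι → A, (∀ j, j ≠ i → a j = b j) → f a = f b

theorem ArgInessential.apply_update [DecidableEq ι] {f : (ι → A) → B} {i : ι}
    (hf : ArgInessential f i) (x : ι → A) (c : A) : f (update x i c) = f x :=
  hf _ _ fun _ hj => update_of_ne hj c x

theorem apply_eq_of_eqOn_of_argInessential [Finite ι] {f : (ι → A) → B} {S : Set ι}
    (hf : ∀ i ∉ S, ArgInessential f i) {x y : ι → A} (hxy : Set.EqOn x y S) :
    f x = f y := by
  classical
  cases nonempty_fintype ι
  suffices h : ∀ D : Finset ι, f (D.piecewise y x) = f x by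
    simpa using (h Finset.univ).symm
  intro D
  induction D using Finset.induction_on with
  | empty => simp
  | insert i D hiD ih =>
    rw [Finset.piecewise_insert, ← ih]
    by_cases hiS : i ∈ S
    · have hi : D.piecewise y x i = y i := by
        rw [Finset.piecewise_eq_of_notMem _ _ _ hiD, hxy hiS]
      rw [← hi, update_eq_self]
    · exact (hf i hiS).apply_update _ _

end Function

theorem stmt_19_general (A B : Type*) (n m : ℕ) (f : (Fin n → A) → B)
    (τ : Fin n → Fin m) (S : Set (Fin n))
    (hS : ∀ i ∉ S, ∀ a b : Fin n → A, (∀ j, j ≠ i → a j = b j) → f a = f b) :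
    ∀ a b : Fin m → A, (∀ j ∈ τ '' S, a j = b j) → f (a ∘ τ) = f (b ∘ τ) :=
  fun _ _ hab =>
    Function.apply_eq_of_eqOn_of_argInessential hS fun i hi => hab (τ i) ⟨i, hi, rfl⟩

/-- If every argument of `f` outside `S` is inessential and `τ` is injective on
`S`, then for all `a b : Fin m → A` agreeing on `τ '' S`, `f (a ∘ τ) = f (b ∘ τ)`. -/
theorem stmt_19 (A B : Type*) (n m : ℕ) (f : (Fin n → A) → B)
    (τ : Fin n → Fin m) (S : Set (Fin n))
    (hS : ∀ i ∉ S, ∀ a b : Fin n → A, (∀ j, j ≠ i → a j = b j) → f a = f b)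
    (hτ : Set.InjOn τ S) :
    ∀ a b : Fin m → A, (∀ j ∈ τ '' S, a j = b j) → f (a ∘ τ) = f (b ∘ τ) :=
  stmt_19_general A B n m f τ S hS
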